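/- Let F be a field of characteristic 2, V an F-vector space with quadratic form Q whose associated bilinear form f vanishes on 2-dimensional subspaces S₁ and S₂. Suppose g ∈ GL(V) and α ∈ F* satisfy Q(gv) = αQ(v) for all v and g(S₁) = S₂. If {b₁,b₂} is a basis of S₁ and {c₁,c₂} a basis of S₂, then there exist α' ∈ F* and β ∈ F with Q(c₁)Q(c₂) = α'²·Q(b₁)Q(b₂) + β². -/
import Mathlib


theorem arf_like_invariant_charTwo (F V : Type*) [Field F] [CharP F 2]
    [AddCommGroup V] [Module F V] (Q : QuadraticForm F V)
    (S₁ S₂ : Submodule F V)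
    (hd₁ : Module.finrank F S₁ = 2) (hd₂ : Module.finrank F S₂ = 2)
    (hf₁ : ∀ u ∈ S₁, ∀ v ∈ S₁, QuadraticMap.polar (⇑Q) u v = 0)
    (hf₂ : ∀ u ∈ S₂, ∀ v ∈ S₂, QuadraticMap.polar (⇑Q) u v = 0)
    (g : V ≃ₗ[F] V) (α : F) (hα : α ≠ 0)
    (hQ : ∀ v : V, Q (g v) = α * Q v)
    (hmap : S₁.map (g : V →ₗ[F] V) = S₂)
    (b₁ b₂ c₁ c₂ : V)
    (hb : Submodule.span F {b₁, b₂} = S₁)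
    (hc : Submodule.span F {c₁, c₂} = S₂)
    (hbli : LinearIndependent F ![b₁, b₂])
    (hcli : LinearIndependent F ![c₁, c₂]) :
    ∃ α' β : F, α' ≠ 0 ∧ Q c₁ * Q c₂ = α' ^ 2 * (Q b₁ * Q b₂) + β ^ 2 := by
  have h2 : (2 : F) = 0 := CharTwo.two_eq_zero
  have hspan : Submodule.span F {g b₁, g b₂} = S₂ := by
    rw [← hmap, ← hb, Submodule.map_span]
    congr 1
    simp [Set.image_insert_eq]
  have hg1 : g b₁ ∈ S₂ := by
    rw [← hspan]; exact Submodule.subset_span (by simp)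
  have hg2 : g b₂ ∈ S₂ := by
    rw [← hspan]; exact Submodule.subset_span (by simp)
  have hpol : QuadraticMap.polar (⇑Q) (g b₁) (g b₂) = 0 := hf₂ _ hg1 _ hg2
  have hc1 : c₁ ∈ Submodule.span F ({g b₁, g b₂} : Set V) := by
    rw [hspan, ← hc]; exact Submodule.subset_span (by simp)
  have hc2 : c₂ ∈ Submodule.span F ({g b₁, g b₂} : Set V) := by
    rw [hspan, ← hc]; exact Submodule.subset_span (by simp)
  obtain ⟨a, b, hab⟩ := Submodule.mem_span_pair.mp hc1
  obtain ⟨c, d, hcd⟩ := Submodule.mem_span_pair.mp hc2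
  have key : ∀ (s t : F) (w : V), s • g b₁ + t • g b₂ = w →
      Q w = α * (s ^ 2 * Q b₁ + t ^ 2 * Q b₂) := by
    intro s t w hw
    rw [← hw, QuadraticMap.map_add (⇑Q) (s • g b₁) (t • g b₂),
      QuadraticMap.polar_smul_left, QuadraticMap.polar_smul_right, hpol,
      QuadraticMap.map_smul, QuadraticMap.map_smul, hQ, hQ]
    simp only [smul_eq_mul]
    ring
  have hQ1 : Q c₁ = α * (a ^ 2 * Q b₁ + b ^ 2 * Q b₂) := key a b c₁ hab
  have hQ2 : Q c₂ = α * (c ^ 2 * Q b₁ + d ^ 2 * Q b₂) := key c d c₂ hcd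
  have hpair := LinearIndependent.pair_iff.mp hcli
  have hdet : a * d + b * c ≠ 0 := by
    intro h
    have hs1 : d * a + b * c = 0 := by linear_combination h
    have hs2 : d * b + b * d = 0 := by linear_combination b * d * h2
    have e1 : d • c₁ + b • c₂ = 0 := by
      calc d • c₁ + b • c₂ = (d * a + b * c) • g b₁ + (d * b + b * d) • g b₂ := by
            rw [← hab, ← hcd]; module
        _ = 0 := by rw [hs1, hs2]; simp
    obtain ⟨hd0, hb0⟩ := hpair d b e1
    have hs3 : c * a + a * c = 0 := by linear_combination a * c * h2
    have hs4 : c * b + a * d = 0 := by linear_combination h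
    have e2 : c • c₁ + a • c₂ = 0 := by
      calc c • c₁ + a • c₂ = (c * a + a * c) • g b₁ + (c * b + a * d) • g b₂ := by
            rw [← hab, ← hcd]; module
        _ = 0 := by rw [hs3, hs4]; simp
    obtain ⟨hc0, ha0⟩ := hpair c a e2
    have hc₁0 : c₁ = 0 := by rw [← hab, ha0, hb0]; simp
    have := hpair 1 0 (by rw [hc₁0]; simp)
    exact one_ne_zero this.1
  refine ⟨α * (a * d + b * c), α * (a * c * Q b₁ + b * d * Q b₂),
    mul_ne_zero hα hdet, ?_⟩
  rw [hQ1, hQ2]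
  linear_combination (-2 * α ^ 2 * a * b * c * d * Q b₁ * Q b₂) * h2
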